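/- The polynomial Q = y⁴ − 2·x·y²·z + x²·z² − y·z³ ∈ ℂ[x,y,z] is homogeneous of degree 4 and is irreducible in ℂ[x,y,z]. -/

import Mathlib

open MvPolynomial

/-- The quartic `Q = y⁴ − 2·x·y²·z + x²·z² − y·z³` in `ℂ[x,y,z]`,
with variables `x = X 0`, `y = X 1`, `z = X 2`. -/
noncomputable def Qpoly : MvPolynomial (Fin 3) ℂ :=
  X 1 ^ 4 - 2 * X 0 * X 1 ^ 2 * X 2 + X 0 ^ 2 * X 2 ^ 2 - X 1 * X 2 ^ 3

/-!
As a polynomial in `x` over `ℂ[y,z]`, `Q = z²·x² − 2y²z·x + y(y³ − z³)` is Eisenstein at the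
prime `y`: the leading coefficient `z²` is not divisible by `y`, the other two coefficients are,
and the constant term is not divisible by `y²`. It is primitive because the prime `z` does not
divide the constant term, so Gauss's lemma makes it irreducible in `ℂ[y,z][x] ≅ ℂ[x,y,z]`.
-/

namespace Polynomial

variable {R : Type*} [CommRing R] {a b c : R}

theorem isPrimitive_quadratic_of_isRelPrime (hac : IsRelPrime a c) :
    (C a * X ^ 2 + C b * X + C c).IsPrimitive := by
  refine isPrimitive_iff_isUnit_of_C_dvd.mpr fun r hr ↦ ?_
  rw [C_dvd_iff_dvd_coeff] at hr
  exact hac (by simpa using hr 2) (by simpa using hr 0)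

theorem irreducible_quadratic_of_eisenstein [IsDomain R] {P : Ideal R} (hP : P.IsPrime)
    (ha : a ∉ P) (hb : b ∈ P) (hc : c ∈ P) (hc2 : c ∉ P ^ 2) (hac : IsRelPrime a c) :
    Irreducible (C a * X ^ 2 + C b * X + C c) := by
  have ha0 : a ≠ 0 := fun h ↦ ha (h ▸ P.zero_mem)
  have hdeg := natDegree_quadratic (b := b) (c := c) ha0
  refine IsEisensteinAt.irreducible ⟨?_, fun {n} hn ↦ ?_, ?_⟩ hP
    (isPrimitive_quadratic_of_isRelPrime hac) (by omega)
  · rwa [leadingCoeff_quadratic ha0]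
  · rw [hdeg] at hn
    interval_cases n <;> simpa
  · simpa using hc2

end Polynomial

namespace MvPolynomial

theorem not_X_dvd_of_eval_ne_zero {σ R : Type*} [CommSemiring R] {i : σ} {p : MvPolynomial σ R}
    (f : σ → R) (hfi : f i = 0) (hp : eval f p ≠ 0) : ¬X i ∣ p := by
  rintro ⟨q, rfl⟩
  simp [hfi] at hp

variable {k : Type*} [Field k]

theorem irreducible_quadratic_in_X0 :
    Irreducible (Polynomial.C (X 1 ^ 2) * Polynomial.X ^ 2 +
      Polynomial.C (-(2 * X 0 ^ 2 * X 1)) * Polynomial.X +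
      Polynomial.C (X 0 ^ 4 - X 0 * X 1 ^ 3) : Polynomial (MvPolynomial (Fin 2) k)) := by
  have hy : Prime (X 0 : MvPolynomial (Fin 2) k) := X_prime
  have hz : Prime (X 1 : MvPolynomial (Fin 2) k) := X_prime
  refine Polynomial.irreducible_quadratic_of_eisenstein
    ((Ideal.span_singleton_prime hy.ne_zero).mpr hy) ?_ ?_ ?_ ?_ ?_
  · rw [Ideal.mem_span_singleton]
    exact not_X_dvd_of_eval_ne_zero ![0, 1] rfl (by simp)
  · exact Ideal.mem_span_singleton.mpr ⟨-(2 * X 0 * X 1), by ring⟩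
  · exact Ideal.mem_span_singleton.mpr ⟨X 0 ^ 3 - X 1 ^ 3, by ring⟩
  · rw [Ideal.span_singleton_pow, Ideal.mem_span_singleton,
      show X 0 ^ 4 - X 0 * X 1 ^ 3 = X 0 * (X 0 ^ 3 - X 1 ^ 3 : MvPolynomial (Fin 2) k) by ring,
      sq, mul_dvd_mul_iff_left hy.ne_zero]
    exact not_X_dvd_of_eval_ne_zero ![0, 1] rfl (by simp)
  · refine IsRelPrime.pow_left (hz.irreducible.isRelPrime_iff_not_dvd.mpr ?_)
    exact not_X_dvd_of_eval_ne_zero ![1, 0] rfl (by simp)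

end MvPolynomial

-- `finSuccEquiv` makes `x = X 0` the polynomial variable and renames `y, z` to `X 0, X 1`.
theorem finSuccEquiv_Qpoly : finSuccEquiv ℂ 2 Qpoly =
    Polynomial.C (X 1 ^ 2) * Polynomial.X ^ 2 + Polynomial.C (-(2 * X 0 ^ 2 * X 1)) * Polynomial.X +
      Polynomial.C (X 0 ^ 4 - X 0 * X 1 ^ 3) := by
  have h1 : (1 : Fin 3) = (0 : Fin 2).succ := rfl
  have h2 : (2 : Fin 3) = (1 : Fin 2).succ := rfl
  simp only [Qpoly, map_sub, map_add, map_mul, map_pow, map_ofNat, h1, h2,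
    finSuccEquiv_X_zero, finSuccEquiv_X_succ]
  simp only [map_neg, map_mul, map_pow, map_ofNat]
  ring

theorem stmt_12 : Qpoly.IsHomogeneous 4 ∧ Irreducible Qpoly := by
  constructor
  · have hx := isHomogeneous_X ℂ (0 : Fin 3)
    have hy := isHomogeneous_X ℂ (1 : Fin 3)
    have hz := isHomogeneous_X ℂ (2 : Fin 3)
    have h2 : (2 : MvPolynomial (Fin 3) ℂ).IsHomogeneous 0 := by
      simpa only [map_ofNat] using isHomogeneous_C (Fin 3) (2 : ℂ)
    exact (((hy.pow 4).sub (((h2.mul hx).mul (hy.pow 2)).mul hz)).add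
      ((hx.pow 2).mul (hz.pow 2))).sub (hy.mul (hz.pow 3))
  · rw [← MulEquiv.irreducible_iff (finSuccEquiv ℂ 2), finSuccEquiv_Qpoly]
    exact irreducible_quadratic_in_X0
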